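/- Let f ∈ C_tem and t > 0. Then for every x ∈ ℝ the integral P_t f(x) = ∫_ℝ p_t(x,y) f(y) dy converges absolutely, the function x ↦ P_t f(x) is continuous on ℝ, and P_t f ∈ C_tem; moreover for every λ > 0, sup_{x∈ℝ} (|P_t f(x)| e^{-λ|x|}) ≤ 2 e^{λ² t / 2} sup_{y∈ℝ} (|f(y)| e^{-λ|y|}). -/

import Mathlib

open MeasureTheory Real

/-- The one-dimensional heat kernel `p_t(x,y) = (2πt)^{-1/2} exp(-(x-y)²/(2t))`. -/
noncomputable def heatKernel (t x y : ℝ) : ℝ :=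
  (Real.sqrt (2 * Real.pi * t))⁻¹ * Real.exp (-(x - y) ^ 2 / (2 * t))

/-- The space `C_tem` of continuous functions with all weighted sup norms finite. -/
def Ctem : Set (ℝ → ℝ) :=
  {f | Continuous f ∧ ∀ lam > (0 : ℝ), ∃ M : ℝ, ∀ x : ℝ, |f x| * Real.exp (-lam * |x|) ≤ M}

lemma integrable_core {t : ℝ} (ht : 0 < t) (β : ℝ) :
    Integrable (fun u : ℝ => Real.exp (β * |u|) * Real.exp (-u ^ 2 / (2 * t))) := by
  have h4t : (0:ℝ) < (4*t)⁻¹ := by positivity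
  have hg : Integrable (fun u : ℝ => Real.exp (β^2 * t) * Real.exp (-(4*t)⁻¹ * u^2)) :=
    (integrable_exp_neg_mul_sq h4t).const_mul _
  refine hg.mono' ?_ ?_
  · exact (Continuous.mul (by continuity) (by continuity)).aestronglyMeasurable
  · filter_upwards with u
    rw [Real.norm_eq_abs, abs_of_nonneg (by positivity), ← Real.exp_add, ← Real.exp_add]
    apply Real.exp_le_exp.mpr
    have hu : u^2 = |u|^2 := (sq_abs u).symm
    have h2t : (2*t) ≠ 0 := by positivity
    have h4t' : (4*t) ≠ 0 := by positivity
    have e1 : β^2*t + u^2/(4*t) - β*|u| = (2*t*β - |u|)^2/(4*t) := by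
      field_simp; rw [hu]; ring
    have e2 : -u^2/(2*t) = -(u^2/(4*t)) + -(u^2/(4*t)) := by field_simp; ring
    have e3 : -(4*t)⁻¹*u^2 = -(u^2/(4*t)) := by field_simp
    have h0 : (0:ℝ) ≤ (2*t*β - |u|)^2/(4*t) := by positivity
    rw [e2, e3]
    linarith

lemma integrable_shift {t : ℝ} (ht : 0 < t) (β x : ℝ) :
    Integrable (fun y : ℝ => Real.exp (β * |y - x|) * Real.exp (-(x - y) ^ 2 / (2 * t))) := by
  have h := (integrable_core ht β).comp_sub_right x
  have e : ∀ y : ℝ, (x - y)^2 = (y - x)^2 := fun y => by ring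
  simpa [e] using h

lemma integral_heat_exp {t : ℝ} (ht : 0 < t) (x a : ℝ) :
    ∫ y : ℝ, Real.exp (-(x - y) ^ 2 / (2 * t)) * Real.exp (a * y)
      = Real.sqrt (2 * Real.pi * t) * Real.exp (a * x + a ^ 2 * t / 2) := by
  have key : ∀ y : ℝ, Real.exp (-(x - y) ^ 2 / (2 * t)) * Real.exp (a * y)
      = Real.exp (a * x + a ^ 2 * t / 2) * Real.exp (-(2*t)⁻¹ * (y - (x + a*t)) ^ 2) := by
    intro y
    rw [← Real.exp_add, ← Real.exp_add]
    congr 1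
    field_simp
    ring
  simp only [key]
  rw [MeasureTheory.integral_const_mul]
  have h2 : (∫ y : ℝ, Real.exp (-(2*t)⁻¹ * (y - (x + a*t)) ^ 2))
      = Real.sqrt (2 * Real.pi * t) := by
    rw [integral_sub_right_eq_self (fun u : ℝ => Real.exp (-(2*t)⁻¹ * u ^ 2)) (x + a*t),
      integral_gaussian]
    congr 1
    field_simp
  rw [h2]; ring

lemma integrable_heat_exp_lin {t : ℝ} (ht : 0 < t) (x a : ℝ) :
    Integrable (fun y : ℝ => Real.exp (-(x - y) ^ 2 / (2 * t)) * Real.exp (a * y)) := by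
  have hg := (integrable_shift ht |a| x).const_mul (Real.exp (a * x))
  refine hg.mono' ?_ ?_
  · exact (Continuous.mul (by continuity) (by continuity)).aestronglyMeasurable
  · filter_upwards with y
    rw [Real.norm_eq_abs, abs_of_nonneg (by positivity)]
    have h1 : a * y ≤ a * x + |a| * |y - x| := by
      have : a * y - a * x = a * (y - x) := by ring
      have h2 : a * (y - x) ≤ |a * (y - x)| := le_abs_self _
      rw [abs_mul] at h2
      linarith
    calc Real.exp (-(x - y) ^ 2 / (2 * t)) * Real.exp (a * y)
        ≤ Real.exp (-(x - y) ^ 2 / (2 * t)) * Real.exp (a * x + |a| * |y - x|) :=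
          mul_le_mul_of_nonneg_left (Real.exp_le_exp.mpr h1) (Real.exp_nonneg _)
      _ = Real.exp (a * x) * (Real.exp (|a| * |y - x|) * Real.exp (-(x - y) ^ 2 / (2 * t))) := by
          rw [Real.exp_add]; ring

lemma sqrt2pit_pos {t : ℝ} (ht : 0 < t) : 0 < Real.sqrt (2 * Real.pi * t) :=
  Real.sqrt_pos.mpr (by positivity)

lemma heatKernel_nonneg {t : ℝ} (ht : 0 < t) (x y : ℝ) : 0 ≤ heatKernel t x y := by
  unfold heatKernel; positivity

lemma heatKernel_eq (t x y : ℝ) :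
    heatKernel t x y = (Real.sqrt (2 * Real.pi * t))⁻¹ * Real.exp (-(x - y) ^ 2 / (2 * t)) := rfl

lemma integrable_heat_abs {t : ℝ} (ht : 0 < t) {lam : ℝ} (hlam : 0 ≤ lam) (x : ℝ) :
    Integrable (fun y : ℝ => heatKernel t x y * Real.exp (lam * |y|)) := by
  have hg := (integrable_shift ht lam x).const_mul
    ((Real.sqrt (2 * Real.pi * t))⁻¹ * Real.exp (lam * |x|))
  refine hg.mono' ?_ ?_
  · exact (Continuous.mul (by unfold heatKernel; continuity) (by continuity)).aestronglyMeasurable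
  · filter_upwards with y
    rw [Real.norm_eq_abs, abs_of_nonneg (mul_nonneg (heatKernel_nonneg ht x y) (Real.exp_nonneg _)),
      heatKernel_eq]
    have hy : |y| ≤ |x| + |y - x| := by
      have h := abs_add_le x (y - x)
      simpa using h
    have h2 : Real.exp (lam * |y|) ≤ Real.exp (lam * |x|) * Real.exp (lam * |y - x|) := by
      rw [← Real.exp_add]
      exact Real.exp_le_exp.mpr (by nlinarith)
    calc (Real.sqrt (2 * Real.pi * t))⁻¹ * Real.exp (-(x - y) ^ 2 / (2 * t)) * Real.exp (lam * |y|)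
        ≤ (Real.sqrt (2 * Real.pi * t))⁻¹ * Real.exp (-(x - y) ^ 2 / (2 * t))
          * (Real.exp (lam * |x|) * Real.exp (lam * |y - x|)) :=
          mul_le_mul_of_nonneg_left h2 (by positivity)
      _ = (Real.sqrt (2 * Real.pi * t))⁻¹ * Real.exp (lam * |x|)
          * (Real.exp (lam * |y - x|) * Real.exp (-(x - y) ^ 2 / (2 * t))) := by ring

lemma integral_heat_exp_abs_le {t : ℝ} (ht : 0 < t) {lam : ℝ} (hlam : 0 ≤ lam) (x : ℝ) :
    ∫ y : ℝ, heatKernel t x y * Real.exp (lam * |y|)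
      ≤ 2 * Real.exp (lam ^ 2 * t / 2) * Real.exp (lam * |x|) := by
  set c := Real.sqrt (2 * Real.pi * t) with hc
  have hcpos := sqrt2pit_pos ht
  have hI1 := integrable_heat_exp_lin ht x lam
  have hI2 := integrable_heat_exp_lin ht x (-lam)
  have hg : Integrable (fun y : ℝ => c⁻¹ * (Real.exp (-(x - y) ^ 2 / (2 * t)) * Real.exp (lam * y)
      + Real.exp (-(x - y) ^ 2 / (2 * t)) * Real.exp (-lam * y))) := by
    have := (hI1.add (by simpa [neg_mul] using hI2)).const_mul c⁻¹
    simpa using this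
  have hle : ∀ y : ℝ, heatKernel t x y * Real.exp (lam * |y|)
      ≤ c⁻¹ * (Real.exp (-(x - y) ^ 2 / (2 * t)) * Real.exp (lam * y)
      + Real.exp (-(x - y) ^ 2 / (2 * t)) * Real.exp (-lam * y)) := by
    intro y
    rw [heatKernel_eq, mul_assoc, ← hc]
    apply mul_le_mul_of_nonneg_left _ (le_of_lt (inv_pos.mpr hcpos))
    rw [← mul_add]
    apply mul_le_mul_of_nonneg_left _ (Real.exp_nonneg _)
    rcases abs_cases y with ⟨h, _⟩ | ⟨h, _⟩
    · rw [h]; exact le_add_of_nonneg_right (Real.exp_nonneg _)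
    · rw [h, show lam * -y = -lam * y by ring]
      exact le_add_of_nonneg_left (Real.exp_nonneg _)
  have h1 := integral_mono_of_nonneg
    (Filter.Eventually.of_forall fun y =>
      mul_nonneg (heatKernel_nonneg ht x y) (Real.exp_nonneg _)) hg
    (Filter.Eventually.of_forall hle)
  refine h1.trans ?_
  rw [MeasureTheory.integral_const_mul, integral_add hI1 (by simpa [neg_mul] using hI2),
    integral_heat_exp ht x lam, integral_heat_exp ht x (-lam)]
  have hne : c ≠ 0 := ne_of_gt hcpos
  rw [← hc]
  have e1 : c⁻¹ * (c * Real.exp (lam * x + lam ^ 2 * t / 2)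
      + c * Real.exp (-lam * x + (-lam) ^ 2 * t / 2))
      = Real.exp (lam * x + lam ^ 2 * t / 2) + Real.exp (-lam * x + lam ^ 2 * t / 2) := by
    field_simp
  rw [e1]
  have h2 : Real.exp (lam * x + lam ^ 2 * t / 2)
      ≤ Real.exp (lam ^ 2 * t / 2) * Real.exp (lam * |x|) := by
    rw [← Real.exp_add]
    apply Real.exp_le_exp.mpr
    have := le_abs_self x
    nlinarith
  have h3 : Real.exp (-lam * x + lam ^ 2 * t / 2)
      ≤ Real.exp (lam ^ 2 * t / 2) * Real.exp (lam * |x|) := by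
    rw [← Real.exp_add]
    apply Real.exp_le_exp.mpr
    have := neg_abs_le x
    nlinarith
  linarith

lemma heatKernel_contMul_y {t : ℝ} (f : ℝ → ℝ) (hfc : Continuous f) (x : ℝ) :
    Continuous (fun y : ℝ => heatKernel t x y * f y) := by
  unfold heatKernel; continuity

theorem heatSemigroup_maps_Ctem (f : ℝ → ℝ) (hf : f ∈ Ctem) (t : ℝ) (ht : 0 < t) :
    (∀ x : ℝ, Integrable fun y => heatKernel t x y * f y) ∧
    Continuous (fun x => ∫ y : ℝ, heatKernel t x y * f y) ∧
    (fun x => ∫ y : ℝ, heatKernel t x y * f y) ∈ Ctem ∧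
    ∀ lam > (0 : ℝ),
      (⨆ x : ℝ, |∫ y : ℝ, heatKernel t x y * f y| * Real.exp (-lam * |x|)) ≤
        2 * Real.exp (lam ^ 2 * t / 2) * ⨆ y : ℝ, |f y| * Real.exp (-lam * |y|) := by
  obtain ⟨hfc, hgrow⟩ := hf
  obtain ⟨M, hM⟩ := hgrow 1 one_pos
  have hM0 : 0 ≤ M := le_trans (by positivity) (hM 0)
  have hfy1 : ∀ y : ℝ, |f y| ≤ M * Real.exp (1 * |y|) := by
    intro y
    have h := hM y
    have := Real.exp_pos (-1 * |y|)
    calc |f y| = |f y| * Real.exp (-1 * |y|) * Real.exp (1 * |y|) := by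
          rw [mul_assoc, ← Real.exp_add]; simp
      _ ≤ M * Real.exp (1 * |y|) := mul_le_mul_of_nonneg_right h (Real.exp_nonneg _)
  -- Integrability
  have hI : ∀ x : ℝ, Integrable fun y => heatKernel t x y * f y := by
    intro x
    refine ((integrable_heat_abs ht zero_le_one x).const_mul M).mono'
      (heatKernel_contMul_y f hfc x).aestronglyMeasurable ?_
    filter_upwards with y
    rw [Real.norm_eq_abs, abs_mul, abs_of_nonneg (heatKernel_nonneg ht x y)]
    calc heatKernel t x y * |f y| ≤ heatKernel t x y * (M * Real.exp (1 * |y|)) :=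
          mul_le_mul_of_nonneg_left (hfy1 y) (heatKernel_nonneg ht x y)
      _ = M * (heatKernel t x y * Real.exp (1 * |y|)) := by ring
  -- Continuity
  have hcont : Continuous (fun x => ∫ y : ℝ, heatKernel t x y * f y) := by
    refine continuous_iff_continuousAt.mpr fun x₀ => ?_
    set c := Real.sqrt (2 * Real.pi * t) with hc
    have hcpos := sqrt2pit_pos ht
    refine continuousAt_of_dominated
      (bound := fun y => c⁻¹ * M * Real.exp |x₀| *
        (Real.exp ((1 + 1/t) * |y - x₀|) * Real.exp (-(x₀ - y) ^ 2 / (2 * t))))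
      (Filter.Eventually.of_forall fun x =>
        (heatKernel_contMul_y f hfc x).aestronglyMeasurable) ?_ ?_ ?_
    · filter_upwards [Metric.ball_mem_nhds x₀ one_pos] with x hx
      filter_upwards with y
      have hxx : |x - x₀| ≤ 1 := le_of_lt (by simpa [Real.dist_eq] using hx)
      rw [Real.norm_eq_abs, abs_mul, abs_of_nonneg (heatKernel_nonneg ht x y), heatKernel_eq, ← hc]
      -- quadratic exponent comparison
      have hkey : -(x - y) ^ 2 / (2 * t) ≤ |y - x₀| / t + -(x₀ - y) ^ 2 / (2 * t) := by
        have h1 : -((x₀ - y) * (x - x₀)) ≤ |y - x₀| * |x - x₀| := by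
          have := neg_abs_le ((x₀ - y) * (x - x₀))
          rw [abs_mul, abs_sub_comm x₀ y] at this
          linarith
        have h2 : |y - x₀| * |x - x₀| ≤ |y - x₀| :=
          mul_le_of_le_one_right (abs_nonneg _) hxx
        have h3 : (x₀ - y) ^ 2 ≤ (x - y) ^ 2 + 2 * |y - x₀| := by
          nlinarith [sq_nonneg (x - x₀)]
        have h4 : (-(x - y) ^ 2) / (2 * t) ≤ (2 * |y - x₀| + -(x₀ - y) ^ 2) / (2 * t) := by
          gcongr
          linarith
        have h5 : (2 * |y - x₀| + -(x₀ - y) ^ 2) / (2 * t)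
            = |y - x₀| / t + -(x₀ - y) ^ 2 / (2 * t) := by
          field_simp
        linarith
      have hfyb : |f y| ≤ M * Real.exp |x₀| * Real.exp |y - x₀| := by
        have h5 : |y| ≤ |x₀| + |y - x₀| := by
          have h := abs_add_le x₀ (y - x₀); simpa using h
        calc |f y| ≤ M * Real.exp (1 * |y|) := hfy1 y
          _ ≤ M * Real.exp |x₀| * Real.exp |y - x₀| := by
            rw [mul_assoc, ← Real.exp_add]
            exact mul_le_mul_of_nonneg_left (Real.exp_le_exp.mpr (by linarith)) hM0
      calc c⁻¹ * Real.exp (-(x - y) ^ 2 / (2 * t)) * |f y|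
          ≤ c⁻¹ * (Real.exp (|y - x₀| / t) * Real.exp (-(x₀ - y) ^ 2 / (2 * t)))
            * (M * Real.exp |x₀| * Real.exp |y - x₀|) := by
            apply mul_le_mul
            · apply mul_le_mul_of_nonneg_left _ (le_of_lt (inv_pos.mpr hcpos))
              rw [← Real.exp_add]; exact Real.exp_le_exp.mpr hkey
            · exact hfyb
            · exact abs_nonneg _
            · positivity
        _ = c⁻¹ * M * Real.exp |x₀| *
            (Real.exp ((1 + 1/t) * |y - x₀|) * Real.exp (-(x₀ - y) ^ 2 / (2 * t))) := by
            rw [show (1 + 1/t) * |y - x₀| = |y - x₀| + |y - x₀| / t by field_simp,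
              Real.exp_add]
            ring
    · exact ((integrable_shift ht (1 + 1/t) x₀).const_mul (c⁻¹ * M * Real.exp |x₀|))
    · filter_upwards with y
      apply Continuous.continuousAt
      unfold heatKernel
      continuity
  -- pointwise weighted bound
  have hpt : ∀ lam > (0 : ℝ), ∀ x : ℝ,
      |∫ y : ℝ, heatKernel t x y * f y| * Real.exp (-lam * |x|) ≤
        2 * Real.exp (lam ^ 2 * t / 2) * ⨆ y : ℝ, |f y| * Real.exp (-lam * |y|) := by
    intro lam hlam x
    obtain ⟨M', hM'⟩ := hgrow lam hlam
    set N := ⨆ y : ℝ, |f y| * Real.exp (-lam * |y|) with hNdef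
    have hbdd : BddAbove (Set.range fun y : ℝ => |f y| * Real.exp (-lam * |y|)) :=
      ⟨M', by rintro _ ⟨y, rfl⟩; exact hM' y⟩
    have hN : ∀ y : ℝ, |f y| * Real.exp (-lam * |y|) ≤ N := fun y => le_ciSup hbdd y
    have hN0 : 0 ≤ N := le_trans (by positivity) (hN 0)
    have hfy : ∀ y : ℝ, |f y| ≤ N * Real.exp (lam * |y|) := by
      intro y
      calc |f y| = |f y| * Real.exp (-lam * |y|) * Real.exp (lam * |y|) := by
            rw [mul_assoc, ← Real.exp_add]; simp
        _ ≤ N * Real.exp (lam * |y|) := mul_le_mul_of_nonneg_right (hN y) (Real.exp_nonneg _)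
    have h1 : |∫ y : ℝ, heatKernel t x y * f y| ≤ ∫ y : ℝ, |heatKernel t x y * f y| := by
      simpa only [Real.norm_eq_abs] using
        norm_integral_le_integral_norm (μ := volume) (fun y : ℝ => heatKernel t x y * f y)
    have h2 : (∫ y : ℝ, |heatKernel t x y * f y|) ≤
        N * (2 * Real.exp (lam ^ 2 * t / 2) * Real.exp (lam * |x|)) := by
      have hmono := integral_mono_of_nonneg
        (Filter.Eventually.of_forall fun y => abs_nonneg (heatKernel t x y * f y))
        ((integrable_heat_abs ht hlam.le x).const_mul N)
        (Filter.Eventually.of_forall (fun y => by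
          show |heatKernel t x y * f y| ≤ N * (heatKernel t x y * Real.exp (lam * |y|))
          rw [abs_mul, abs_of_nonneg (heatKernel_nonneg ht x y)]
          calc heatKernel t x y * |f y|
              ≤ heatKernel t x y * (N * Real.exp (lam * |y|)) :=
                mul_le_mul_of_nonneg_left (hfy y) (heatKernel_nonneg ht x y)
            _ = N * (heatKernel t x y * Real.exp (lam * |y|)) := by ring))
      refine hmono.trans ?_
      rw [MeasureTheory.integral_const_mul]
      exact mul_le_mul_of_nonneg_left (integral_heat_exp_abs_le ht hlam.le x) hN0
    have hexp1 : Real.exp (lam * |x|) * Real.exp (-lam * |x|) = 1 := by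
      rw [← Real.exp_add]; simp
    calc |∫ y : ℝ, heatKernel t x y * f y| * Real.exp (-lam * |x|)
        ≤ N * (2 * Real.exp (lam ^ 2 * t / 2) * Real.exp (lam * |x|)) * Real.exp (-lam * |x|) :=
          mul_le_mul_of_nonneg_right (h1.trans h2) (Real.exp_nonneg _)
      _ = 2 * Real.exp (lam ^ 2 * t / 2) * N *
          (Real.exp (lam * |x|) * Real.exp (-lam * |x|)) := by ring
      _ = 2 * Real.exp (lam ^ 2 * t / 2) * N := by rw [hexp1, mul_one]
  refine ⟨hI, hcont, ⟨hcont, fun lam hlam => ⟨_, hpt lam hlam⟩⟩, fun lam hlam => ?_⟩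
  exact ciSup_le (hpt lam hlam)
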